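/- Let S and A be finite nonempty sets, Safe ⊆ S, p : S → A → S → ℝ a transition kernel with p(s,a,s') ≥ 0 and ∑_{s'} p(s,a,s') = 1 for all s, a, and π : ℝ^d → S → A → ℝ a parameterized policy with π(θ,s,a) > 0 and ∑_{a} π(θ,s,a) = 1 for all θ, s, such that θ ↦ π(θ,s,a) is differentiable for every s, a. Fix T ≥ 2 and an initial state s_0 ∈ Safe, and define W_t : ℝ^d → S → ℝ by W_T(θ,s) = ∑_{a} π(θ,s,a) ∑_{s'} p(s,a,s')·𝟙(s' ∈ Safe) and W_t(θ,s) = ∑_{a} π(θ,s,a) ∑_{s'} p(s,a,s')·𝟙(s' ∈ Safe)·W_{t+1}(θ,s') for 1 ≤ t ≤ T−1. For a full trajectory τ = (a_0, s_1, …, a_{T−1}, s_T) let q_θ(τ) = ∏_{t=0}^{T−1} π(θ,s_t,a_t)·p(s_t,a_t,s_{t+1}) and G_1(τ) = ∏_{t=1}^{T} 𝟙(s_t ∈ Safe); for a partial trajectory σ = (a_0, s_1, …, a_{T−2}, s_{T−1}) let q_θ^{(T−1)}(σ) = ∏_{t=0}^{T−2} π(θ,s_t,a_t)·p(s_t,a_t,s_{t+1}).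 Then for every θ: ∇_θ W_1(θ, s_0) = ∑_{t=0}^{T−2} ∑_{τ} q_θ(τ)·G_1(τ)·∇_θ log π(θ, s_t, a_t) + ∑_{σ} q_θ^{(T−1)}(σ)·(∏_{t=1}^{T−1} 𝟙(s_t ∈ Safe))·∇_θ W_T(θ, s_{T−1}). In expectation notation: ∇_θ E[G_1 | S_0] = ∑_{t=0}^{T−2} E[G_1·∇_θ log π_θ(A_t | S_t) | S_0] + E[∇_θ E[G_T | S_{T−1}]·∏_{t=1}^{T−1} 𝟙(S_t ∈ Safe) | S_0]. -/

import Mathlib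

/-! Unrolling the value recursion writes `W_1(θ, s₀)` as the sum over length-`T`
trajectories of `q_θ(τ) G_1(τ)`. Since `q_θ(τ)` is a product of the factors
`π(θ, s_t, a_t) p(s_t, a_t, s_{t+1})`, the product rule gives the likelihood-ratio identity
`∇q_θ = q_θ ∑_t ∇ log π(θ, s_t, a_t)`. The score terms with `t ≤ T - 2` form the first sum;
in the last one, summing out the final action and state leaves `∇W_T(θ, s_{T-1})` weighted
by the partial trajectory. -/

open scoped BigOperators

noncomputable section

/-- Pad a finite tuple to a function on all of `ℕ` (values beyond `T` are arbitrary). -/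
def pad {α : Type*} [Nonempty α] {T : ℕ} (f : Fin T → α) : ℕ → α :=
  fun n => if h : n < T then f ⟨n, h⟩ else Classical.arbitrary α

/-- The state sequence of a trajectory: `s_0 = s0` and `s_{m+1} = ss m`. -/
def stSeq {S : Type*} [Nonempty S] {T : ℕ} (s0 : S) (ss : Fin T → S) : ℕ → S
  | 0 => s0
  | (m + 1) => pad ss m

/-- Indicator (as a real number) that a state is safe. -/
def safeInd {S : Type*} (Safe : Set S) [DecidablePred (· ∈ Safe)] (s : S) : ℝ :=
  if s ∈ Safe then 1 else 0

/-- Probability of the (partial) trajectory `(a_0, s_1, …, a_{T-1}, s_T)` starting from `s0`: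
`∏_{t=0}^{T-1} π(θ, s_t, a_t) · p(s_t, a_t, s_{t+1})`. -/
def qTraj {S A : Type*} [Nonempty S] [Nonempty A] {d : ℕ}
    (p : S → A → S → ℝ) (pol : EuclideanSpace ℝ (Fin d) → S → A → ℝ)
    (s0 : S) (T : ℕ) (θ : EuclideanSpace ℝ (Fin d)) (τ : (Fin T → A) × (Fin T → S)) : ℝ :=
  ∏ t ∈ Finset.range T,
    pol θ (stSeq s0 τ.2 t) (pad τ.1 t) * p (stSeq s0 τ.2 t) (pad τ.1 t) (stSeq s0 τ.2 (t + 1))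

/-- Product of safety indicators `∏_{t=1}^{m} 𝟙(s_t ∈ Safe)` along a trajectory. -/
def safeProd {S : Type*} [Nonempty S] (Safe : Set S) [DecidablePred (· ∈ Safe)]
    (s0 : S) {T : ℕ} (ss : Fin T → S) (m : ℕ) : ℝ :=
  ∏ t ∈ Finset.Icc 1 m, safeInd Safe (stSeq s0 ss t)

/-- Backward value recursion: `Wk Safe p pol k θ s = W_{T-k}(θ, s)`, with
`Wk 0 = W_T` the one-step safety probability. -/
def Wk {S A : Type*} [Fintype S] [Fintype A] {d : ℕ}
    (Safe : Set S) [DecidablePred (· ∈ Safe)]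
    (p : S → A → S → ℝ) (pol : EuclideanSpace ℝ (Fin d) → S → A → ℝ) :
    ℕ → EuclideanSpace ℝ (Fin d) → S → ℝ
  | 0 => fun θ s => ∑ a, pol θ s a * ∑ s', p s a s' * safeInd Safe s'
  | (k + 1) => fun θ s =>
      ∑ a, pol θ s a * ∑ s', p s a s' * safeInd Safe s' * Wk Safe p pol k θ s'

section Trajectories

variable {α S : Type*} [Nonempty α] [Nonempty S] {T : ℕ}

lemma pad_of_lt (f : Fin T → α) {n : ℕ} (h : n < T) : pad f n = f ⟨n, h⟩ := dif_pos h

lemma pad_cons_zero (x : α) (f : Fin T → α) : pad (Fin.cons x f) 0 = x := by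
  rw [pad_of_lt _ T.succ_pos, Fin.mk_zero, Fin.cons_zero]

lemma pad_cons_succ (x : α) (f : Fin T → α) (m : ℕ) :
    pad (Fin.cons x f) (m + 1) = pad f m := by
  by_cases h : m < T
  · rw [pad_of_lt _ (Nat.succ_lt_succ h), pad_of_lt f h]
    exact Fin.cons_succ (α := fun _ => α) x f ⟨m, h⟩
  · rw [pad, pad, dif_neg h, dif_neg (by omega)]

lemma pad_snoc_of_lt (f : Fin T → α) (x : α) {m : ℕ} (h : m < T) :
    pad (Fin.snoc f x) m = pad f m := by
  rw [pad_of_lt _ (Nat.lt_succ_of_lt h), pad_of_lt f h]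
  exact Fin.snoc_castSucc (α := fun _ => α) x f ⟨m, h⟩

lemma pad_snoc_last (f : Fin T → α) (x : α) : pad (Fin.snoc f x) T = x := by
  rw [pad_of_lt _ T.lt_succ_self]
  exact Fin.snoc_last (α := fun _ => α) x f

lemma stSeq_cons_succ (s0 s1 : S) (ss : Fin T → S) (m : ℕ) :
    stSeq s0 (Fin.cons s1 ss) (m + 1) = stSeq s1 ss m := by
  cases m with
  | zero => exact pad_cons_zero s1 ss
  | succ k => exact pad_cons_succ s1 ss k

lemma stSeq_snoc_of_le (s0 s' : S) (ss : Fin T → S) {m : ℕ} (h : m ≤ T) :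
    stSeq s0 (Fin.snoc ss s') m = stSeq s0 ss m := by
  cases m with
  | zero => rfl
  | succ k => exact pad_snoc_of_lt ss s' h

lemma stSeq_snoc_last (s0 s' : S) (ss : Fin T → S) :
    stSeq s0 (Fin.snoc ss s') (T + 1) = s' := pad_snoc_last ss s'

end Trajectories

section SafeProd

variable {S : Type*} [Nonempty S] (Safe : Set S) [DecidablePred (· ∈ Safe)] {k : ℕ}

lemma safeProd_eq_prod_range (s0 : S) (ss : Fin k → S) (m : ℕ) :
    safeProd Safe s0 ss m = ∏ t ∈ Finset.range m, safeInd Safe (stSeq s0 ss (t + 1)) := by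
  rw [safeProd, ← Finset.Ico_add_one_right_eq_Icc, Finset.prod_Ico_eq_prod_range]
  simp only [add_tsub_cancel_right, add_comm 1]

lemma safeProd_cons (s0 s1 : S) (ss : Fin k → S) :
    safeProd Safe s0 (Fin.cons s1 ss) (k + 1) = safeInd Safe s1 * safeProd Safe s1 ss k := by
  rw [safeProd_eq_prod_range, safeProd_eq_prod_range, Finset.prod_range_succ', mul_comm]
  simp only [stSeq_cons_succ]
  rfl

lemma safeProd_snoc (s0 s' : S) (ss : Fin k → S) :
    safeProd Safe s0 (Fin.snoc ss s') (k + 1) = safeProd Safe s0 ss k * safeInd Safe s' := by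
  rw [safeProd_eq_prod_range, safeProd_eq_prod_range, Finset.prod_range_succ, stSeq_snoc_last]
  congr 1
  exact Finset.prod_congr rfl fun t ht =>
    by rw [stSeq_snoc_of_le s0 s' ss (Finset.mem_range.mp ht)]

end SafeProd

section Reindex

variable {S A β : Type*} [Fintype S] [Fintype A] [AddCommMonoid β] {k : ℕ}

lemma sum_traj_succ_eq_sum_cons (F : (Fin (k + 1) → A) × (Fin (k + 1) → S) → β) :
    ∑ τ, F τ = ∑ a, ∑ s', ∑ σ : (Fin k → A) × (Fin k → S),
      F (Fin.cons a σ.1, Fin.cons s' σ.2) := by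
  rw [← Fintype.sum_equiv
    ((Equiv.prodProdProdComm A S (Fin k → A) (Fin k → S)).trans
      ((Fin.consEquiv fun _ => A).prodCongr (Fin.consEquiv fun _ => S)))
    (fun x => F (Fin.cons x.1.1 x.2.1, Fin.cons x.1.2 x.2.2)) F (fun _ => rfl),
    Fintype.sum_prod_type, Fintype.sum_prod_type]

lemma sum_traj_succ_eq_sum_snoc (F : (Fin (k + 1) → A) × (Fin (k + 1) → S) → β) :
    ∑ τ, F τ = ∑ σ : (Fin k → A) × (Fin k → S), ∑ a, ∑ s',
      F (Fin.snoc σ.1 a, Fin.snoc σ.2 s') := by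
  rw [← Fintype.sum_equiv
    ((Equiv.prodProdProdComm (Fin k → A) (Fin k → S) A S).trans
      (((Equiv.prodComm _ A).trans (Fin.snocEquiv fun _ => A)).prodCongr
        ((Equiv.prodComm _ S).trans (Fin.snocEquiv fun _ => S))))
    (fun x => F (Fin.snoc x.1.1 x.2.1, Fin.snoc x.1.2 x.2.2)) F (fun _ => rfl),
    Fintype.sum_prod_type]
  exact Finset.sum_congr rfl fun σ _ => Fintype.sum_prod_type _

end Reindex

section Gradient

variable {F ι : Type*} [NormedAddCommGroup F] [InnerProductSpace ℝ F] [CompleteSpace F]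
  {x : F}

lemma gradient_eq_toDual_symm_fderiv (f : F → ℝ) :
    gradient f x = (InnerProductSpace.toDual ℝ F).symm (fderiv ℝ f x) := rfl

lemma gradient_fun_sum (u : Finset ι) {f : ι → F → ℝ}
    (hf : ∀ i ∈ u, DifferentiableAt ℝ (f i) x) :
    gradient (fun y => ∑ i ∈ u, f i y) x = ∑ i ∈ u, gradient (f i) x := by
  simp only [gradient_eq_toDual_symm_fderiv, fderiv_fun_sum hf, map_sum]

lemma gradient_mul_const {f : F → ℝ} (hf : DifferentiableAt ℝ f x) (c : ℝ) :
    gradient (fun y => f y * c) x = c • gradient f x := by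
  simp only [gradient_eq_toDual_symm_fderiv, fderiv_mul_const hf, map_smul]

lemma gradient_fun_finset_prod [DecidableEq ι] (u : Finset ι) {f : ι → F → ℝ}
    (hf : ∀ i ∈ u, DifferentiableAt ℝ (f i) x) :
    gradient (fun y => ∏ i ∈ u, f i y) x =
      ∑ i ∈ u, (∏ j ∈ u.erase i, f j x) • gradient (f i) x := by
  simp only [gradient_eq_toDual_symm_fderiv, fderiv_finsetProd hf, map_sum, map_smul]

end Gradient

section QTraj

variable {S A : Type*} [Nonempty S] [Nonempty A] {d k : ℕ}
  (p : S → A → S → ℝ) (pol : EuclideanSpace ℝ (Fin d) → S → A → ℝ)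

lemma qTraj_cons (s0 s1 : S) (a0 : A) (as : Fin k → A) (ss : Fin k → S)
    (θ : EuclideanSpace ℝ (Fin d)) :
    qTraj p pol s0 (k + 1) θ (Fin.cons a0 as, Fin.cons s1 ss) =
      pol θ s0 a0 * p s0 a0 s1 * qTraj p pol s1 k θ (as, ss) := by
  rw [qTraj, qTraj, Finset.prod_range_succ', mul_comm]
  simp only [stSeq_cons_succ, pad_cons_succ, pad_cons_zero]
  rfl

lemma qTraj_snoc (s0 s' : S) (a : A) (as : Fin k → A) (ss : Fin k → S)
    (θ : EuclideanSpace ℝ (Fin d)) :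
    qTraj p pol s0 (k + 1) θ (Fin.snoc as a, Fin.snoc ss s') =
      qTraj p pol s0 k θ (as, ss) * (pol θ (stSeq s0 ss k) a * p (stSeq s0 ss k) a s') := by
  rw [qTraj, qTraj, Finset.prod_range_succ, stSeq_snoc_of_le s0 s' ss le_rfl, pad_snoc_last,
    stSeq_snoc_last]
  congr 1
  refine Finset.prod_congr rfl fun t ht => ?_
  have ht : t < k := Finset.mem_range.mp ht
  rw [stSeq_snoc_of_le s0 s' ss ht.le, pad_snoc_of_lt as a ht, stSeq_snoc_of_le s0 s' ss ht]

lemma differentiableAt_qTraj {θ : EuclideanSpace ℝ (Fin d)}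
    (hpold : ∀ s a, DifferentiableAt ℝ (fun θ' => pol θ' s a) θ) (s0 : S)
    (τ : (Fin k → A) × (Fin k → S)) :
    DifferentiableAt ℝ (fun θ' => qTraj p pol s0 k θ' τ) θ := by
  unfold qTraj
  exact (HasFDerivAt.finsetProd fun t _ => ((hpold _ _).mul_const _).hasFDerivAt).differentiableAt

lemma gradient_qTraj {θ : EuclideanSpace ℝ (Fin d)}
    (hpold : ∀ s a, DifferentiableAt ℝ (fun θ' => pol θ' s a) θ)
    (hpol0 : ∀ s a, pol θ s a ≠ 0) (s0 : S) (τ : (Fin k → A) × (Fin k → S)) :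
    gradient (fun θ' => qTraj p pol s0 k θ' τ) θ =
      ∑ t ∈ Finset.range k, qTraj p pol s0 k θ τ •
        ((pol θ (stSeq s0 τ.2 t) (pad τ.1 t))⁻¹ •
          gradient (fun θ' => pol θ' (stSeq s0 τ.2 t) (pad τ.1 t)) θ) := by
  unfold qTraj
  rw [gradient_fun_finset_prod _ fun t _ => (hpold _ _).mul_const _]
  refine Finset.sum_congr rfl fun t ht => ?_
  rw [gradient_mul_const (hpold _ _), smul_smul, smul_smul, ← Finset.mul_prod_erase _ _ ht]
  have := hpol0 (stSeq s0 τ.2 t) (pad τ.1 t)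
  field_simp

end QTraj

lemma gradient_Wk_zero {S A : Type*} [Fintype S] [Fintype A] (Safe : Set S)
    [DecidablePred (· ∈ Safe)] {d : ℕ} (p : S → A → S → ℝ)
    (pol : EuclideanSpace ℝ (Fin d) → S → A → ℝ) {θ : EuclideanSpace ℝ (Fin d)}
    (hpold : ∀ s a, DifferentiableAt ℝ (fun θ' => pol θ' s a) θ) (s : S) :
    gradient (fun θ' => Wk Safe p pol 0 θ' s) θ =
      ∑ a, (∑ s', p s a s' * safeInd Safe s') • gradient (fun θ' => pol θ' s a) θ := by
  unfold Wk
  rw [gradient_fun_sum _ fun a _ => (hpold s a).mul_const _]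
  exact Finset.sum_congr rfl fun a _ => gradient_mul_const (hpold s a) _

section Unrolling

variable {S A : Type*} [Fintype S] [Fintype A] [Nonempty S] [Nonempty A]
  (Safe : Set S) [DecidablePred (· ∈ Safe)] {d : ℕ}
  (p : S → A → S → ℝ) (pol : EuclideanSpace ℝ (Fin d) → S → A → ℝ)

lemma sum_qTraj_mul_safeProd_succ (k : ℕ) (θ : EuclideanSpace ℝ (Fin d)) (s : S) :
    ∑ τ : (Fin (k + 1) → A) × (Fin (k + 1) → S),
        qTraj p pol s (k + 1) θ τ * safeProd Safe s τ.2 (k + 1) =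
      ∑ a, pol θ s a * ∑ s', p s a s' * safeInd Safe s' *
        ∑ σ : (Fin k → A) × (Fin k → S),
          qTraj p pol s' k θ σ * safeProd Safe s' σ.2 k := by
  rw [sum_traj_succ_eq_sum_cons]
  simp only [qTraj_cons, safeProd_cons, Finset.mul_sum]
  refine Finset.sum_congr rfl fun a _ => Finset.sum_congr rfl fun s' _ =>
    Finset.sum_congr rfl fun σ _ => ?_
  ring

theorem Wk_eq_sum_qTraj_mul_safeProd (k : ℕ) (θ : EuclideanSpace ℝ (Fin d)) (s : S) :
    Wk Safe p pol k θ s =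
      ∑ τ : (Fin (k + 1) → A) × (Fin (k + 1) → S),
        qTraj p pol s (k + 1) θ τ * safeProd Safe s τ.2 (k + 1) := by
  induction k generalizing s with
  | zero =>
    rw [sum_qTraj_mul_safeProd_succ]
    simp [Wk, qTraj, safeProd]
  | succ k ih =>
    rw [sum_qTraj_mul_safeProd_succ]
    simp only [Wk, ih]

variable {θ : EuclideanSpace ℝ (Fin d)}
  (hpold : ∀ s a, DifferentiableAt ℝ (fun θ' => pol θ' s a) θ)
include hpold

lemma sum_score_last_eq_sum_gradient_Wk_zero (hpol0 : ∀ s a, pol θ s a ≠ 0) (s0 : S)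
    (k : ℕ) :
    ∑ τ : (Fin (k + 1) → A) × (Fin (k + 1) → S),
        (qTraj p pol s0 (k + 1) θ τ * safeProd Safe s0 τ.2 (k + 1)) •
          ((pol θ (stSeq s0 τ.2 k) (pad τ.1 k))⁻¹ •
            gradient (fun θ' => pol θ' (stSeq s0 τ.2 k) (pad τ.1 k)) θ) =
      ∑ σ : (Fin k → A) × (Fin k → S),
        (qTraj p pol s0 k θ σ * safeProd Safe s0 σ.2 k) •
          gradient (fun θ' => Wk Safe p pol 0 θ' (stSeq s0 σ.2 k)) θ := by
  rw [sum_traj_succ_eq_sum_snoc]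
  refine Finset.sum_congr rfl fun σ _ => ?_
  rw [gradient_Wk_zero Safe p pol hpold, Finset.smul_sum]
  refine Finset.sum_congr rfl fun a _ => ?_
  simp only [qTraj_snoc, safeProd_snoc, stSeq_snoc_of_le _ _ _ le_rfl, pad_snoc_last, smul_smul,
    ← Finset.sum_smul, Finset.mul_sum]
  congr 1
  refine Finset.sum_congr rfl fun s' _ => ?_
  have := hpol0 (stSeq s0 σ.2 k) a
  field_simp

theorem gradient_Wk_eq_unrolled (hpol0 : ∀ s a, pol θ s a ≠ 0) (s0 : S) (k : ℕ) :
    gradient (fun θ' => Wk Safe p pol k θ' s0) θ =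
      (∑ t ∈ Finset.range k, ∑ τ : (Fin (k + 1) → A) × (Fin (k + 1) → S),
          (qTraj p pol s0 (k + 1) θ τ * safeProd Safe s0 τ.2 (k + 1)) •
            ((pol θ (stSeq s0 τ.2 t) (pad τ.1 t))⁻¹ •
              gradient (fun θ' => pol θ' (stSeq s0 τ.2 t) (pad τ.1 t)) θ)) +
        ∑ σ : (Fin k → A) × (Fin k → S),
          (qTraj p pol s0 k θ σ * safeProd Safe s0 σ.2 k) •
            gradient (fun θ' => Wk Safe p pol 0 θ' (stSeq s0 σ.2 k)) θ := by
  simp only [Wk_eq_sum_qTraj_mul_safeProd Safe p pol k]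
  rw [gradient_fun_sum _ fun τ _ => (differentiableAt_qTraj p pol hpold s0 τ).mul_const _]
  have hterm : ∀ τ : (Fin (k + 1) → A) × (Fin (k + 1) → S),
      gradient (fun θ' => qTraj p pol s0 (k + 1) θ' τ * safeProd Safe s0 τ.2 (k + 1)) θ =
        ∑ t ∈ Finset.range (k + 1),
          (qTraj p pol s0 (k + 1) θ τ * safeProd Safe s0 τ.2 (k + 1)) •
            ((pol θ (stSeq s0 τ.2 t) (pad τ.1 t))⁻¹ •
              gradient (fun θ' => pol θ' (stSeq s0 τ.2 t) (pad τ.1 t)) θ) := fun τ => by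
    rw [gradient_mul_const (differentiableAt_qTraj p pol hpold s0 τ),
      gradient_qTraj p pol hpold hpol0, Finset.smul_sum]
    exact Finset.sum_congr rfl fun t _ => by rw [smul_smul, mul_comm]
  simp only [hterm]
  rw [Finset.sum_comm, Finset.sum_range_succ,
    sum_score_last_eq_sum_gradient_Wk_zero Safe p pol hpold hpol0]

end Unrolling

theorem gradient_W1_unrolled_general
    {S A : Type*} [Fintype S] [Fintype A] [Nonempty S] [Nonempty A]
    (Safe : Set S) [DecidablePred (· ∈ Safe)] (d : ℕ)
    (p : S → A → S → ℝ)
    (pol : EuclideanSpace ℝ (Fin d) → S → A → ℝ)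
    (hpol0 : ∀ θ s a, 0 < pol θ s a)
    (hpold : ∀ s a, Differentiable ℝ (fun θ => pol θ s a))
    (T : ℕ) (s0 : S) :
    ∀ θ : EuclideanSpace ℝ (Fin d),
      gradient (fun θ' => Wk Safe p pol (T - 1) θ' s0) θ =
        (∑ t ∈ Finset.range (T - 1),
          ∑ τ : (Fin T → A) × (Fin T → S),
            (qTraj p pol s0 T θ τ * safeProd Safe s0 τ.2 T) •
              ((pol θ (stSeq s0 τ.2 t) (pad τ.1 t))⁻¹ •
                gradient (fun θ' => pol θ' (stSeq s0 τ.2 t) (pad τ.1 t)) θ))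
        + ∑ σ : (Fin (T - 1) → A) × (Fin (T - 1) → S),
            (qTraj p pol s0 (T - 1) θ σ * safeProd Safe s0 σ.2 (T - 1)) •
              gradient (fun θ' => Wk Safe p pol 0 θ' (stSeq s0 σ.2 (T - 1))) θ := by
  intro θ
  have h := gradient_Wk_eq_unrolled Safe p pol (fun s a => (hpold s a).differentiableAt)
    (fun s a => (hpol0 θ s a).ne') s0
  cases T with
  | zero => simpa using h 0
  | succ k => exact h k

/-- Lemma 4 of the paper: unrolled form of the gradient of `W_1(θ, s_0) = E[G_1 | S_0 = s_0]`:
`∇_θ E[G_1 | S_0] = ∑_{t=0}^{T-2} E[G_1 ∇_θ log π_θ(A_t | S_t) | S_0]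
  + E[∇_θ E[G_T | S_{T-1}] ∏_{t=1}^{T-1} 𝟙(S_t ∈ Safe) | S_0]`. -/
theorem gradient_W1_unrolled
    {S A : Type*} [Fintype S] [Fintype A] [Nonempty S] [Nonempty A]
    (Safe : Set S) [DecidablePred (· ∈ Safe)] (d : ℕ)
    (p : S → A → S → ℝ)
    (hp0 : ∀ s a s', 0 ≤ p s a s') (hp1 : ∀ s a, ∑ s', p s a s' = 1)
    (pol : EuclideanSpace ℝ (Fin d) → S → A → ℝ)
    (hpol0 : ∀ θ s a, 0 < pol θ s a) (hpol1 : ∀ θ s, ∑ a, pol θ s a = 1)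
    (hpold : ∀ s a, Differentiable ℝ (fun θ => pol θ s a))
    (T : ℕ) (hT : 2 ≤ T) (s0 : S) (hs0 : s0 ∈ Safe) :
    ∀ θ : EuclideanSpace ℝ (Fin d),
      gradient (fun θ' => Wk Safe p pol (T - 1) θ' s0) θ =
        (∑ t ∈ Finset.range (T - 1),
          ∑ τ : (Fin T → A) × (Fin T → S),
            (qTraj p pol s0 T θ τ * safeProd Safe s0 τ.2 T) •
              ((pol θ (stSeq s0 τ.2 t) (pad τ.1 t))⁻¹ •
                gradient (fun θ' => pol θ' (stSeq s0 τ.2 t) (pad τ.1 t)) θ))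
        + ∑ σ : (Fin (T - 1) → A) × (Fin (T - 1) → S),
            (qTraj p pol s0 (T - 1) θ σ * safeProd Safe s0 σ.2 (T - 1)) •
              gradient (fun θ' => Wk Safe p pol 0 θ' (stSeq s0 σ.2 (T - 1))) θ :=
  gradient_W1_unrolled_general Safe d p pol hpol0 hpold T s0
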